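/- arXiv:2105.13827 — 8 statements merged into one kernel-verified Lean document; each statement's English description precedes it below -/
import Mathlib

section
/- For n = 2m even, 0 ≤ r ≤ n(q−1), and k ≥ 1, the number of integers u with 0 ≤ u ≤ q^n − 1, wt_q(u) = n(q−1) − r, and |O(u) − E(u)| = k equals 2·A((n(q−1)−r−k)/2)·A((n(q−1)−r+k)/2), where A(s) is the number of m-tuples of digits in [0, q−1] summing to s; for k = 0 the count equals A((n(q−1)−r)/2)^2. -/
/-- The base-`q` digit sum (`q`-weight) over `n` digit positions. -/
def wtq (q n u : ℕ) : ℕ := ∑ i ∈ Finset.range n, u / q ^ i % q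

/-- The sum of odd-position base-`q` digits of `u` (over `n` positions). -/
def Odd_q (q n u : ℕ) : ℕ := ∑ i ∈ (Finset.range n).filter (fun i => i % 2 = 1), u / q ^ i % q

/-- The sum of even-position base-`q` digits of `u` (over `n` positions). -/
def Even_q (q n u : ℕ) : ℕ := ∑ i ∈ (Finset.range n).filter (fun i => i % 2 = 0), u / q ^ i % q

/-- `A q m s` is the number of `m`-tuples of digits in `[0, q-1]` summing to `s`
(zero when `s` is negative). -/
def tupleCount (q m : ℕ) (s : ℤ) : ℕ :=
  (Finset.univ.filter (fun f : Fin m → Fin q => ∑ i, ((f i : ℕ) : ℤ) = s)).card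

lemma digit_eq {q n : ℕ} (f : Fin n → Fin q) (i : Fin n) :
    (finFunctionFinEquiv f : ℕ) / q ^ (i : ℕ) % q = (f i : ℕ) := by
  conv_rhs => rw [← finFunctionFinEquiv.symm_apply_apply f]
  rfl

lemma sum_filter_range_eq_fin (n c : ℕ) (g : ℕ → ℕ) :
    ∑ i ∈ (Finset.range n).filter (fun i => i % 2 = c), g i
      = ∑ i ∈ Finset.univ.filter (fun i : Fin n => (i : ℕ) % 2 = c), g i := by
  rw [Finset.sum_filter, Finset.sum_filter, ← Fin.sum_univ_eq_sum_range]

lemma wtq_eq (q n u : ℕ) : wtq q n u = Odd_q q n u + Even_q q n u := by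
  unfold wtq Odd_q Even_q
  rw [← Finset.sum_filter_add_sum_filter_not (Finset.range n) (fun i => i % 2 = 1)]
  congr 1
  apply Finset.sum_congr _ (fun _ _ => rfl)
  apply Finset.filter_congr
  intro i _
  omega

/-- Interleaving equivalence: a pair of `m`-digit strings gives a `2m`-digit string,
with the first component on even positions and the second on odd positions. -/
def pairE (q m : ℕ) : (Fin m → Fin q) × (Fin m → Fin q) ≃ (Fin (2 * m) → Fin q) where
  toFun p := fun j => if (j : ℕ) % 2 = 0
    then p.1 ⟨(j : ℕ) / 2, by have := j.isLt; omega⟩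
    else p.2 ⟨(j : ℕ) / 2, by have := j.isLt; omega⟩
  invFun f := (fun i => f ⟨2 * (i : ℕ), by have := i.isLt; omega⟩,
               fun i => f ⟨2 * (i : ℕ) + 1, by have := i.isLt; omega⟩)
  left_inv := by
    rintro ⟨g, h⟩
    refine Prod.ext ?_ ?_ <;> funext i <;> simp only []
    · rw [if_pos (by omega)]
      congr 1
      exact Fin.ext (by simp only [Fin.val_mk]; omega)
    · rw [if_neg (by omega)]
      congr 1
      exact Fin.ext (by simp only [Fin.val_mk]; omega)
  right_inv := by
    intro f
    funext j
    simp only []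
    by_cases hj : (j : ℕ) % 2 = 0
    · rw [if_pos hj]
      congr 1
      exact Fin.ext (by simp only [Fin.val_mk]; omega)
    · rw [if_neg hj]
      congr 1
      exact Fin.ext (by simp only [Fin.val_mk]; omega)

lemma pairE_even_sum (q m : ℕ) (p : (Fin m → Fin q) × (Fin m → Fin q)) :
    ∑ i ∈ Finset.univ.filter (fun i : Fin (2 * m) => (i : ℕ) % 2 = 0),
        (pairE q m p i : ℕ)
      = ∑ i, (p.1 i : ℕ) := by
  refine Finset.sum_nbij' (fun i : Fin (2 * m) => (⟨(i : ℕ) / 2, by have := i.isLt; omega⟩ : Fin m))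
    (fun j : Fin m => (⟨2 * (j : ℕ), by have := j.isLt; omega⟩ : Fin (2 * m)))
    ?_ ?_ ?_ ?_ ?_
  · intro a _; exact Finset.mem_univ _
  · intro a _
    simp only [Finset.mem_filter, Finset.mem_univ, true_and]
    omega
  · intro a ha
    simp only [Finset.mem_filter, Finset.mem_univ, true_and] at ha
    exact Fin.ext (by simp only [Fin.val_mk]; omega)
  · intro a _
    exact Fin.ext (by simp only [Fin.val_mk]; omega)
  · intro a ha
    simp only [Finset.mem_filter, Finset.mem_univ, true_and] at ha
    congr 1
    show pairE q m p a = _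
    simp only [pairE, Equiv.coe_fn_mk]
    rw [if_pos ha]

lemma pairE_odd_sum (q m : ℕ) (p : (Fin m → Fin q) × (Fin m → Fin q)) :
    ∑ i ∈ Finset.univ.filter (fun i : Fin (2 * m) => (i : ℕ) % 2 = 1),
        (pairE q m p i : ℕ)
      = ∑ i, (p.2 i : ℕ) := by
  refine Finset.sum_nbij' (fun i : Fin (2 * m) => (⟨(i : ℕ) / 2, by have := i.isLt; omega⟩ : Fin m))
    (fun j : Fin m => (⟨2 * (j : ℕ) + 1, by have := j.isLt; omega⟩ : Fin (2 * m)))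
    ?_ ?_ ?_ ?_ ?_
  · intro a _; exact Finset.mem_univ _
  · intro a _
    simp only [Finset.mem_filter, Finset.mem_univ, true_and]
    omega
  · intro a ha
    simp only [Finset.mem_filter, Finset.mem_univ, true_and] at ha
    exact Fin.ext (by simp only [Fin.val_mk]; omega)
  · intro a _
    exact Fin.ext (by simp only [Fin.val_mk]; omega)
  · intro a ha
    simp only [Finset.mem_filter, Finset.mem_univ, true_and] at ha
    congr 1
    show pairE q m p a = _
    simp only [pairE, Equiv.coe_fn_mk]
    rw [if_neg (by omega)]

lemma even_digits (q m : ℕ) (p : (Fin m → Fin q) × (Fin m → Fin q)) :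
    Even_q q (2 * m) (finFunctionFinEquiv (pairE q m p) : ℕ) = ∑ i, (p.1 i : ℕ) := by
  unfold Even_q
  rw [sum_filter_range_eq_fin, ← pairE_even_sum q m p]
  exact Finset.sum_congr rfl (fun i _ => digit_eq _ i)

lemma odd_digits (q m : ℕ) (p : (Fin m → Fin q) × (Fin m → Fin q)) :
    Odd_q q (2 * m) (finFunctionFinEquiv (pairE q m p) : ℕ) = ∑ i, (p.2 i : ℕ) := by
  unfold Odd_q
  rw [sum_filter_range_eq_fin, ← pairE_odd_sum q m p]
  exact Finset.sum_congr rfl (fun i _ => digit_eq _ i)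

/-- Main counting lemma: the number of `u < q^(2m)` with even-position digit sum `a`
and odd-position digit sum `b` is `A(a) * A(b)`. -/
lemma countOE (q m : ℕ) (a b : ℤ) :
    ((Finset.range (q ^ (2 * m))).filter (fun u =>
        (Even_q q (2 * m) u : ℤ) = a ∧ (Odd_q q (2 * m) u : ℤ) = b)).card
      = tupleCount q m a * tupleCount q m b := by
  have h1 : ((Finset.range (q ^ (2 * m))).filter (fun u =>
        (Even_q q (2 * m) u : ℤ) = a ∧ (Odd_q q (2 * m) u : ℤ) = b)).card
      = ((Finset.univ : Finset (Fin (q ^ (2 * m)))).filter (fun u : Fin (q ^ (2 * m)) =>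
        (Even_q q (2 * m) u.val : ℤ) = a ∧ (Odd_q q (2 * m) u.val : ℤ) = b)).card := by
    rw [← Nat.Iio_eq_range, ← Fin.map_valEmbedding_univ, Finset.filter_map, Finset.card_map]
    rfl
  rw [h1]
  have h2 : ((Finset.univ : Finset ((Fin m → Fin q) × (Fin m → Fin q))).filter (fun p =>
        (∑ i, ((p.1 i : ℕ) : ℤ)) = a ∧ (∑ i, ((p.2 i : ℕ) : ℤ)) = b)).card
      = ((Finset.univ : Finset (Fin (q ^ (2 * m)))).filter (fun u : Fin (q ^ (2 * m)) =>
        (Even_q q (2 * m) u.val : ℤ) = a ∧ (Odd_q q (2 * m) u.val : ℤ) = b)).card := by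
    refine Finset.card_equiv ((pairE q m).trans finFunctionFinEquiv) ?_
    intro p
    simp only [Finset.mem_filter, Finset.mem_univ, true_and, Equiv.trans_apply]
    rw [even_digits q m p, odd_digits q m p]
    push_cast
    rfl
  rw [← h2]
  unfold tupleCount
  rw [← Finset.card_product, ← Finset.filter_product, Finset.univ_product_univ]

/-- for `n = 2m`, `0 ≤ r ≤ n(q-1)`, and `k` of the same parity as
`n(q-1) - r`, the number of `u` with `0 ≤ u ≤ q^n - 1`, `wt_q(u) = n(q-1) - r` and
`|O(u) - E(u)| = k` equals `2·A((n(q-1)-r-k)/2)·A((n(q-1)-r+k)/2)` when `k ≥ 1`,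
and `A((n(q-1)-r)/2)^2` when `k = 0`. -/
theorem stmt_5 (q m n r k : ℕ) (hq : 2 ≤ q) (hm : 1 ≤ m) (hn : n = 2 * m)
    (hr : r ≤ n * (q - 1))
    (hpar : (k : ℤ) % 2 = ((n * (q - 1) : ℤ) - r) % 2) :
    (1 ≤ k →
      (((Finset.range (q ^ n)).filter (fun u =>
          (wtq q n u : ℤ) = (n * (q - 1) : ℤ) - r ∧
          ((Odd_q q n u : ℤ) - Even_q q n u).natAbs = k)).card : ℤ)
        = 2 * tupleCount q m ((((n * (q - 1) : ℤ) - r) - k) / 2)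
            * tupleCount q m ((((n * (q - 1) : ℤ) - r) + k) / 2)) ∧
    (k = 0 →
      (((Finset.range (q ^ n)).filter (fun u =>
          (wtq q n u : ℤ) = (n * (q - 1) : ℤ) - r ∧
          ((Odd_q q n u : ℤ) - Even_q q n u).natAbs = k)).card : ℤ)
        = (tupleCount q m (((n * (q - 1) : ℤ) - r) / 2)) ^ 2) := by
  subst hn
  set W : ℤ := ((2 * m : ℕ) : ℤ) * ((q : ℤ) - 1) - (r : ℤ) with hW
  obtain ⟨t, ht⟩ : ∃ t : ℤ, W - (k : ℤ) = 2 * t := ⟨(W - (k : ℤ)) / 2, by omega⟩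
  have ha : (W - (k : ℤ)) / 2 = t := by omega
  have hb : (W + (k : ℤ)) / 2 = t + k := by omega
  constructor
  · intro hk
    have hsplit : ((Finset.range (q ^ (2 * m))).filter (fun u =>
          (wtq q (2 * m) u : ℤ) = W ∧
          ((Odd_q q (2 * m) u : ℤ) - Even_q q (2 * m) u).natAbs = k))
        = ((Finset.range (q ^ (2 * m))).filter (fun u =>
            (Even_q q (2 * m) u : ℤ) = t ∧ (Odd_q q (2 * m) u : ℤ) = t + k))
          ∪ ((Finset.range (q ^ (2 * m))).filter (fun u =>
            (Even_q q (2 * m) u : ℤ) = t + k ∧ (Odd_q q (2 * m) u : ℤ) = t)) := by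
      rw [← Finset.filter_or]
      apply Finset.filter_congr
      intro u _
      rw [wtq_eq, Int.natAbs_eq_iff]
      push_cast
      omega
    have hdisj : Disjoint
        ((Finset.range (q ^ (2 * m))).filter (fun u =>
            (Even_q q (2 * m) u : ℤ) = t ∧ (Odd_q q (2 * m) u : ℤ) = t + k))
        ((Finset.range (q ^ (2 * m))).filter (fun u =>
            (Even_q q (2 * m) u : ℤ) = t + k ∧ (Odd_q q (2 * m) u : ℤ) = t)) := by
      rw [Finset.disjoint_left]
      intro u hu1 hu2
      simp only [Finset.mem_filter] at hu1 hu2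
      omega
    rw [hsplit, Finset.card_union_of_disjoint hdisj, countOE, countOE, ha, hb]
    push_cast
    ring
  · intro hk
    subst hk
    have hsplit : ((Finset.range (q ^ (2 * m))).filter (fun u =>
          (wtq q (2 * m) u : ℤ) = W ∧
          ((Odd_q q (2 * m) u : ℤ) - Even_q q (2 * m) u).natAbs = 0))
        = ((Finset.range (q ^ (2 * m))).filter (fun u =>
            (Even_q q (2 * m) u : ℤ) = t ∧ (Odd_q q (2 * m) u : ℤ) = t)) := by
      apply Finset.filter_congr
      intro u _
      rw [wtq_eq, Int.natAbs_eq_iff]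
      push_cast
      omega
    have hc : W / 2 = t := by omega
    rw [hsplit, countOE, hc]
    push_cast
    ring
end

section
/- Let V be an F_q-subspace of F_{q^n} of dimension k. For any integer i with 1 ≤ i ≤ q^n − 1 whose q-weight is less than k(q−1), the power sum Σ_{v ∈ V} v^i equals zero. -/
/-!
Write `i = ∑ₜ dₜ qᵗ` in base `q`. Then `v ^ i = ∏ₜ (v ^ qᵗ) ^ dₜ`, and each `v ↦ v ^ qᵗ` is an
iterate of the `F_q`-linear Frobenius, so in coordinates with respect to a basis of `V` the map
`v ↦ v ^ i` is a homogeneous polynomial of degree `wt_q(i) < k (q - 1)`. Each monomial of such a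
polynomial has some variable of degree `< q - 1`, whose power sum over `F_q` vanishes, so the sum
over `F_q ^ k` is zero (the lemma behind Chevalley–Warning).
-/

open Finset MvPolynomial

theorem Nat.sum_range_div_pow_mod_mul_pow (b i n : ℕ) :
    ∑ t ∈ range n, i / b ^ t % b * b ^ t = i % b ^ n := by
  induction n with
  | zero => simp [Nat.mod_one]
  | succ n ih => rw [sum_range_succ, ih, Nat.mod_pow_succ, mul_comm]

namespace FiniteField

variable {K R σ : Type*} [Field K] [Fintype K] [CommRing R] [Algebra K R]

local notation "q" => Fintype.card K

theorem sum_smul_pow_card_pow (s : Finset σ) (x : σ → K) (e : σ → R) (t : ℕ) :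
    (∑ j ∈ s, x j • e j) ^ q ^ t = ∑ j ∈ s, x j • e j ^ q ^ t := by
  have hfrob (y : R) : (frobeniusAlgHom K R ^ t) y = y ^ q ^ t := by
    rw [AlgHom.coe_pow, coe_frobeniusAlgHom, pow_iterate]
  simp only [← hfrob, map_sum, map_smul]

variable [Fintype σ]

theorem exists_isHomogeneous_eval_eq_pow (e : σ → R) {i n : ℕ} (hi : i < q ^ n) :
    ∃ P : MvPolynomial σ R, P.IsHomogeneous (∑ t ∈ range n, i / q ^ t % q) ∧
      ∀ x : σ → K, eval (fun j ↦ algebraMap K R (x j)) P = (∑ j, x j • e j) ^ i := by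
  refine ⟨∏ t ∈ range n, (∑ j, C (e j ^ q ^ t) * X j) ^ (i / q ^ t % q), ?_, fun x ↦ ?_⟩
  · simpa using IsHomogeneous.prod _ _ _ fun t _ ↦
      (IsHomogeneous.sum _ _ _ fun j _ ↦ isHomogeneous_C_mul_X (e j ^ q ^ t) j).pow (i / q ^ t % q)
  · simp only [map_prod, map_pow, map_sum, map_mul, eval_C, eval_X]
    simp_rw [mul_comm _ (algebraMap K R _), ← Algebra.smul_def, ← sum_smul_pow_card_pow,
      ← pow_mul, prod_pow_eq_pow_sum, mul_comm (q ^ _), Nat.sum_range_div_pow_mod_mul_pow,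
      Nat.mod_eq_of_lt hi]

variable [DecidableEq σ]

theorem sum_eval_algebraMap_eq_zero (f : MvPolynomial σ R)
    (h : f.totalDegree < (q - 1) * Fintype.card σ) :
    ∑ x : σ → K, eval (fun j ↦ algebraMap K R (x j)) f = 0 := by
  have hmonomial (d : σ →₀ ℕ) (hd : d ∈ f.support) :
      ∑ x : σ → K, ∏ j, algebraMap K R (x j) ^ d j = 0 := by
    have := sum_eval_eq_zero (monomial d (1 : K))
      ((totalDegree_monomial_le d 1).trans_lt ((le_totalDegree hd).trans_lt h))
    simpa [eval_monomial, ← map_pow, ← map_prod, ← map_sum] using congr(algebraMap K R $this)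
  simp_rw [eval_eq']
  rw [sum_comm]
  exact sum_eq_zero fun d hd ↦ by rw [← mul_sum, hmonomial d hd, mul_zero]

theorem sum_linearCombination_pow_eq_zero (e : σ → R) {i n : ℕ} (hi : i < q ^ n)
    (hwt : ∑ t ∈ range n, i / q ^ t % q < (q - 1) * Fintype.card σ) :
    ∑ x : σ → K, (∑ j, x j • e j) ^ i = 0 := by
  obtain ⟨P, hP, hPeval⟩ := exists_isHomogeneous_eval_eq_pow (K := K) e hi
  simp_rw [← hPeval]
  exact sum_eval_algebraMap_eq_zero P (hP.totalDegree_le.trans_lt hwt)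

end FiniteField

theorem stmt_6_general {K F : Type*} [Field K] [Field F] [Algebra K F] [Fintype K]
    (n k : ℕ)
    (V : Submodule K F) [Fintype ↥V] (hV : Module.finrank K ↥V = k)
    (i : ℕ) (hi2 : i ≤ (Fintype.card K) ^ n - 1)
    (hwt : ∑ j ∈ Finset.range n, i / (Fintype.card K) ^ j % (Fintype.card K)
            < k * (Fintype.card K - 1)) :
    ∑ v : V, (v : F) ^ i = 0 := by
  have : Module.Finite K V := Module.Finite.of_finite
  let b := Module.finBasisOfFinrankEq K V hV
  have hcoord : ∑ v : V, (v : F) ^ i = ∑ x : Fin k → K, (∑ j, x j • (b j : F)) ^ i := by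
    rw [← b.equivFun.symm.toEquiv.sum_comp]
    simp [Module.Basis.equivFun_symm_apply]
  rw [hcoord]
  exact FiniteField.sum_linearCombination_pow_eq_zero _
    (Nat.lt_of_le_sub_one (pow_pos Fintype.card_pos n) hi2)
    (by rwa [Fintype.card_fin, mul_comm])

/-- let `V` be an `F_q`-subspace of `F_{q^n}` of dimension `k`.
For any `1 ≤ i ≤ q^n - 1` whose `q`-weight is less than `k(q-1)`,
the power sum `Σ_{v ∈ V} v^i` is zero. -/
theorem stmt_6 {K F : Type*} [Field K] [Field F] [Algebra K F] [Fintype K] [Fintype F]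
    (n k : ℕ) (hn : 1 ≤ n) (hkn : k ≤ n)
    (hF : Fintype.card F = (Fintype.card K) ^ n)
    (V : Submodule K F) [Fintype ↥V] (hV : Module.finrank K ↥V = k)
    (i : ℕ) (hi1 : 1 ≤ i) (hi2 : i ≤ (Fintype.card K) ^ n - 1)
    (hwt : ∑ j ∈ Finset.range n, i / (Fintype.card K) ^ j % (Fintype.card K)
            < k * (Fintype.card K - 1)) :
    ∑ v : V, (v : F) ^ i = 0 :=
  stmt_6_general n k V hV i hi2 hwt
end

section
/- Let n = 2m, ρ = 2ρ', and let u satisfy wt_q(u) = (n−ρ)(q−1) with E(u) > (m−ρ')(q−1) > O(u). Then wt_{q^2}(u) < (m−ρ')(q^2−1). -/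
lemma even_sum_aux (f : ℕ → ℕ) (m : ℕ) :
    ∑ i ∈ (Finset.range (2 * m)).filter (fun i => i % 2 = 0), f i
      = ∑ i ∈ Finset.range m, f (2 * i) := by
  induction m with
  | zero => simp
  | succ k ih =>
    have h2 : 2 * (k + 1) = (2 * k + 1) + 1 := by ring
    rw [h2, Finset.range_add_one, Finset.range_add_one, Finset.filter_insert, Finset.filter_insert,
      Finset.sum_range_succ]
    have h3 : ¬ ((2 * k + 1) % 2 = 0) := by omega
    have h4 : (2 * k) % 2 = 0 := by omega
    rw [if_neg h3, if_pos h4, Finset.sum_insert (by simp)]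
    rw [ih]; omega

lemma odd_sum_aux (f : ℕ → ℕ) (m : ℕ) :
    ∑ i ∈ (Finset.range (2 * m)).filter (fun i => i % 2 = 1), f i
      = ∑ i ∈ Finset.range m, f (2 * i + 1) := by
  induction m with
  | zero => simp
  | succ k ih =>
    have h2 : 2 * (k + 1) = (2 * k + 1) + 1 := by ring
    rw [h2, Finset.range_add_one, Finset.range_add_one, Finset.filter_insert, Finset.filter_insert,
      Finset.sum_range_succ]
    have h3 : (2 * k + 1) % 2 = 1 := by omega
    have h4 : ¬ ((2 * k) % 2 = 1) := by omega
    rw [if_pos h3, if_neg h4, Finset.sum_insert (by simp)]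
    rw [ih]; omega

lemma pair_sum_aux (f : ℕ → ℕ) (m : ℕ) : ∑ i ∈ Finset.range (2 * m), f i
    = ∑ i ∈ Finset.range m, (f (2 * i) + f (2 * i + 1)) := by
  induction m with
  | zero => simp
  | succ k ih =>
    have h2 : 2 * (k + 1) = (2 * k + 1) + 1 := by ring
    rw [h2, Finset.sum_range_succ, Finset.sum_range_succ, ih, Finset.sum_range_succ]
    omega

lemma wtq_sq (q m u : ℕ) :
    wtq (q ^ 2) m u = Even_q q (2 * m) u + q * Odd_q q (2 * m) u := by
  unfold wtq Even_q Odd_q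
  rw [even_sum_aux, odd_sum_aux, Finset.mul_sum, ← Finset.sum_add_distrib]
  refine Finset.sum_congr rfl fun i _ => ?_
  have h1 : (q ^ 2) ^ i = q ^ (2 * i) := (pow_mul q 2 i).symm
  have h2 : u / q ^ (2 * i + 1) = u / q ^ (2 * i) / q := by
    rw [Nat.div_div_eq_div_mul, ← pow_succ]
  rw [h1, h2, sq, Nat.mod_mul]

/-- let `n = 2m`, `ρ = 2ρ'`, and let `u` satisfy
`wt_q(u) = (n-ρ)(q-1)` with `E(u) > (m-ρ')(q-1) > O(u)`.
Then `wt_{q^2}(u) < (m-ρ')(q^2-1)`. -/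
theorem stmt_12 (q m ρ' u : ℕ) (hq : 2 ≤ q) (hρ : ρ' ≤ m) (hu : u ≤ q ^ (2 * m) - 1)
    (hwt : wtq q (2 * m) u = (2 * m - 2 * ρ') * (q - 1))
    (hE : Even_q q (2 * m) u > (m - ρ') * (q - 1))
    (hO : (m - ρ') * (q - 1) > Odd_q q (2 * m) u) :
    wtq (q ^ 2) m u < (m - ρ') * (q ^ 2 - 1) := by
  have hsplit : wtq q (2 * m) u = Even_q q (2 * m) u + Odd_q q (2 * m) u := by
    unfold wtq Even_q Odd_q
    rw [even_sum_aux, odd_sum_aux, ← Finset.sum_add_distrib]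
    exact pair_sum_aux _ m
  rw [wtq_sq]
  set E := Even_q q (2 * m) u
  set O := Odd_q q (2 * m) u
  set a := m - ρ'
  obtain ⟨k, rfl⟩ : ∃ k, q = k + 2 := ⟨q - 2, by omega⟩
  have hEO : E + O = 2 * (a * (k + 1)) := by
    rw [hsplit] at hwt
    calc E + O = (2 * m - 2 * ρ') * (k + 2 - 1) := hwt
      _ = (2 * a) * (k + 1) := by congr 1; omega
      _ = 2 * (a * (k + 1)) := by ring
  have hO' : O < a * (k + 1) := by
    have : (k + 2) - 1 = k + 1 := by omega
    rwa [this] at hO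
  have htarget : (k + 2) ^ 2 - 1 = k ^ 2 + 4 * k + 3 := by ring_nf; omega
  rw [htarget]
  nlinarith [hEO, hO', Nat.mul_le_mul_left (k + 1) (Nat.succ_le_of_lt hO')]
end

section
/- Write r = ρ(q−1) + s with 0 ≤ ρ ≤ n−1 and 0 ≤ s < q−1. Then (q−s)q^{n−ρ−1} − 1 has base-q expansion (q−s−1)q^{n−ρ−1} + Σ_{i=0}^{n−ρ−2}(q−1)q^i when ρ ≤ n−2 (and equals q−s−1 when ρ = n−1), and consequently every u with 0 < u < (q−s)q^{n−ρ−1} − 1 satisfies wt_q(u) ≤ n(q−1) − r − 1. -/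
/-!
Put `c = q - s` and `m = n - ρ - 1`, so that `n(q-1) - r - 1 = m(q-1) + c - 2`. Every
`u < c q^m - 1` has at most `m + 1` base-`q` digits; the largest weight among numbers below
`c q^m` is `m(q-1) + c - 1`, attained only by `c q^m - 1`, so smaller `u` lose at least one more.
This goes by induction on `m`, splitting off the lowest digit.
-/

lemma mul_pow_sub_one_eq_add_geom_sum {q c : ℕ} (hq : 1 ≤ q) (hc : 1 ≤ c) (m : ℕ) :
    c * q ^ m - 1 = (c - 1) * q ^ m + ∑ i ∈ Finset.range m, (q - 1) * q ^ i := by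
  have hgeom : ∑ i ∈ Finset.range m, (q - 1) * q ^ i = q ^ m - 1 := by
    rw [← Finset.mul_sum, mul_comm, geom_sum_mul_of_one_le hq]
  have hsplit : (c - 1) * q ^ m + q ^ m = c * q ^ m := by
    rw [← Nat.succ_mul, Nat.succ_eq_add_one, Nat.sub_add_cancel hc]
  have hpos : 0 < q ^ m := Nat.pow_pos hq
  omega

namespace wtq

lemma zero (q u : ℕ) : wtq q 0 u = 0 := rfl

lemma succ (q m u : ℕ) : wtq q (m + 1) u = u % q + wtq q m (u / q) := by
  rw [wtq, Finset.sum_range_succ', pow_zero, Nat.div_one, add_comm]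
  congr 1
  refine Finset.sum_congr rfl fun i _ => ?_
  rw [Nat.div_div_eq_div_mul, ← pow_succ']

lemma succ_eq_add_top_digit (q m u : ℕ) :
    wtq q (m + 1) u = wtq q m u + u / q ^ m % q :=
  Finset.sum_range_succ _ _

lemma le_mul_sub_one {q : ℕ} (hq : 1 ≤ q) (m u : ℕ) : wtq q m u ≤ m * (q - 1) := by
  calc wtq q m u ≤ ∑ _i ∈ Finset.range m, (q - 1) :=
        Finset.sum_le_sum fun i _ => Nat.le_sub_one_of_lt (Nat.mod_lt _ hq)
    _ = m * (q - 1) := by rw [Finset.sum_const, Finset.card_range, smul_eq_mul]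

lemma eq_of_lt_pow {q k n u : ℕ} (hq : 1 ≤ q) (hk : k ≤ n) (hu : u < q ^ k) :
    wtq q n u = wtq q k u := by
  refine (Finset.sum_subset (Finset.range_subset_range.mpr hk) fun i _ hi => ?_).symm
  have hki : q ^ k ≤ q ^ i := Nat.pow_le_pow_right hq (by simpa using hi)
  rw [Nat.div_eq_of_lt (hu.trans_le hki), Nat.zero_mod]

lemma add_one_le_of_lt_mul_pow {q m c u : ℕ} (hq : 1 ≤ q) (hu : u < c * q ^ m) :
    wtq q (m + 1) u + 1 ≤ m * (q - 1) + c := by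
  have htop : u / q ^ m < c := Nat.div_lt_of_lt_mul (by rwa [mul_comm])
  have := le_mul_sub_one hq m u
  have := Nat.mod_le (u / q ^ m) q
  rw [succ_eq_add_top_digit]
  omega

lemma add_two_le_of_add_one_lt_mul_pow {q : ℕ} (hq : 1 ≤ q) (m : ℕ) :
    ∀ {c u : ℕ}, u + 1 < c * q ^ m → wtq q (m + 1) u + 2 ≤ m * (q - 1) + c := by
  induction m with
  | zero =>
    intro c u hu
    have := Nat.mod_le u q
    rw [succ, zero]
    simp only [pow_zero, mul_one] at hu
    omega
  | succ m ih =>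
    intro c u hu
    have hdigit : u % q ≤ q - 1 := Nat.le_sub_one_of_lt (Nat.mod_lt _ hq)
    have hdecomp := Nat.div_add_mod u q
    have hpow : c * q ^ (m + 1) = q * (c * q ^ m) := by ring
    have hquot : u / q < c * q ^ m := Nat.div_lt_of_lt_mul (by omega)
    have hexp : (m + 1) * (q - 1) = m * (q - 1) + (q - 1) := Nat.succ_mul m (q - 1)
    rw [succ]
    rcases Nat.lt_or_ge (u / q + 1) (c * q ^ m) with hlt | hge
    · have := ih hlt
      omega
    · -- `u / q = c q^m - 1`, so a lowest digit `q - 1` would give `u + 1 = c q^(m+1)`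
      have hlow : u % q < q - 1 := by
        by_contra! hlow
        have : q * (u / q + 1) = c * q ^ (m + 1) := by
          rw [hpow, show u / q + 1 = c * q ^ m by omega]
        rw [Nat.mul_add_one] at this
        omega
      have := add_one_le_of_lt_mul_pow hq hquot
      omega

end wtq

theorem stmt_13_general (q n r ρ s : ℕ) (hρ : ρ ≤ n - 1) (hn : 1 ≤ n)
    (hs : s < q - 1) (hr : r = ρ * (q - 1) + s) :
    (ρ + 2 ≤ n →
      (q - s) * q ^ (n - ρ - 1) - 1
        = (q - s - 1) * q ^ (n - ρ - 1) + ∑ i ∈ Finset.range (n - ρ - 1), (q - 1) * q ^ i) ∧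
    (ρ + 1 = n → (q - s) * q ^ (n - ρ - 1) - 1 = q - s - 1) ∧
    (∀ u, 0 < u → u < (q - s) * q ^ (n - ρ - 1) - 1 → wtq q n u ≤ n * (q - 1) - r - 1) := by
  set m := n - ρ - 1
  have hn_eq : n * (q - 1) = ρ * (q - 1) + (q - 1) + m * (q - 1) := by
    rw [← Nat.succ_mul, ← add_mul]; congr 1; omega
  refine ⟨fun _ => mul_pow_sub_one_eq_add_geom_sum (by omega) (by omega) m,
    fun h => by simp [m, show n - ρ - 1 = 0 by omega], fun u _ hu => ?_⟩
  have hbound := wtq.add_two_le_of_add_one_lt_mul_pow (by omega : 1 ≤ q) m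
    (c := q - s) (u := u) (by omega)
  have hu_lt : u < q ^ (m + 1) := by
    rw [pow_succ']
    exact lt_of_lt_of_le (by omega) (Nat.mul_le_mul_right _ (Nat.sub_le q s))
  rw [wtq.eq_of_lt_pow (by omega) (by omega) hu_lt]
  omega

/-- write `r = ρ(q-1) + s` with `0 ≤ ρ ≤ n-1`, `0 ≤ s < q-1`.
Then `(q-s)q^{n-ρ-1} - 1` has base-`q` expansion
`(q-s-1)q^{n-ρ-1} + Σ_{i=0}^{n-ρ-2}(q-1)q^i` when `ρ ≤ n-2` (and equals `q-s-1`
when `ρ = n-1`), and every `u` with `0 < u < (q-s)q^{n-ρ-1} - 1` satisfies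
`wt_q(u) ≤ n(q-1) - r - 1`. -/
theorem stmt_13 (q n r ρ s : ℕ) (hq : 2 ≤ q) (hρ : ρ ≤ n - 1) (hn : 1 ≤ n)
    (hs : s < q - 1) (hr : r = ρ * (q - 1) + s) :
    (ρ + 2 ≤ n →
      (q - s) * q ^ (n - ρ - 1) - 1
        = (q - s - 1) * q ^ (n - ρ - 1) + ∑ i ∈ Finset.range (n - ρ - 1), (q - 1) * q ^ i) ∧
    (ρ + 1 = n → (q - s) * q ^ (n - ρ - 1) - 1 = q - s - 1) ∧
    (∀ u, 0 < u → u < (q - s) * q ^ (n - ρ - 1) - 1 → wtq q n u ≤ n * (q - 1) - r - 1) :=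
  stmt_13_general q n r ρ s hρ hn hs hr
end

section
/- Let δ = q^{n−ρ} − 1 and let u with 1 ≤ u ≤ δ − 1. Then wt_q(δ + u) ≤ (n−ρ)(q−1), with equality if and only if u = q^{n−ρ} − q^j for some j ∈ [1, n−ρ−1]. -/
private lemma digSum_step (q : ℕ) (hq : 2 ≤ q) (v : ℕ) :
    (Nat.digits q v).sum = v % q + (Nat.digits q (v / q)).sum := by
  rcases Nat.eq_zero_or_pos v with h | h
  · simp [h]
  · rw [Nat.digits_def' (by omega : 1 < q) h]; simp

private lemma cancelAux (q A B c : ℕ) (hq : 0 < q) (h : q * A + c = q * B) :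
    ∃ k, B = A + k ∧ c = q * k := by
  have hAB : A ≤ B := Nat.le_of_mul_le_mul_left (by omega) hq
  refine ⟨B - A, by omega, ?_⟩
  have : q * B = q * A + q * (B - A) := by
    rw [← Nat.mul_add]
    congr 1
    omega
  omega

/-- Lemma A -/
private lemma lemA (q : ℕ) (hq : 2 ≤ q) :
    ∀ m v, v < q ^ m →
      (Nat.digits q v).sum ≤ m * (q - 1) ∧
      ((Nat.digits q v).sum = m * (q - 1) ↔ v + 1 = q ^ m) := by
  intro m
  induction m with
  | zero =>
    intro v hv
    have : v = 0 := by simpa using hv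
    subst this; simp
  | succ m ih =>
    intro v hv
    have hsum0 := digSum_step q hq v
    have hvdr0 : q * (v / q) + v % q = v := Nat.div_add_mod v q
    have hrlt0 : v % q < q := Nat.mod_lt _ (by omega)
    have hdlt0 : v / q < q ^ m := by
      apply Nat.div_lt_of_lt_mul
      rw [← pow_succ']; exact hv
    obtain ⟨d, r, hd, hr⟩ : ∃ d r, v / q = d ∧ v % q = r := ⟨_, _, rfl, rfl⟩
    simp only [hd, hr] at hsum0 hvdr0 hrlt0 hdlt0
    have hvdr : q * d + r = v := hvdr0
    have hrlt : r < q := hrlt0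
    have hdlt : d < q ^ m := hdlt0
    obtain ⟨ihb, ihe⟩ := ih d hdlt
    have hsum : (Nat.digits q v).sum = r + (Nat.digits q d).sum := hsum0
    have hmul : (m + 1) * (q - 1) = m * (q - 1) + (q - 1) := by ring
    have hqq : q ^ (m + 1) = q * q ^ m := by rw [pow_succ]; ring
    constructor
    · omega
    constructor
    · intro he
      have h1 : r = q - 1 ∧ (Nat.digits q d).sum = m * (q - 1) := by omega
      have h2 : d + 1 = q ^ m := ihe.mp h1.2
      have h3 : q * (d + 1) = q * q ^ m := by rw [h2]
      have h4 : q * (d + 1) = q * d + q := by ring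
      omega
    · intro he
      have hle : q * (d + 1) ≤ q * q ^ m := Nat.mul_le_mul_left q (by omega)
      have hd1 : q * (d + 1) = q * d + q := by ring
      have hreq : r = q - 1 := by omega
      have hdeq : q * (d + 1) = q * q ^ m := by omega
      have hdm : d + 1 = q ^ m := Nat.eq_of_mul_eq_mul_left (by omega) hdeq
      have : (Nat.digits q d).sum = m * (q - 1) := ihe.mpr hdm
      omega

/-- Lemma B -/
private lemma lemB (q : ℕ) (hq : 2 ≤ q) :
    ∀ m v, v + 1 < q ^ m →
      (Nat.digits q v).sum + 1 ≤ m * (q - 1) ∧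
      ((Nat.digits q v).sum + 1 = m * (q - 1) ↔
        ∃ i, i < m ∧ v + 1 + q ^ i = q ^ m) := by
  intro m
  induction m with
  | zero => intro v hv; simp at hv
  | succ m ih =>
    intro v hv
    have hsum0 := digSum_step q hq v
    have hvdr0 : q * (v / q) + v % q = v := Nat.div_add_mod v q
    have hrlt0 : v % q < q := Nat.mod_lt _ (by omega)
    have hdlt0 : v / q < q ^ m := by
      apply Nat.div_lt_of_lt_mul
      rw [← pow_succ']; omega
    obtain ⟨d, r, hd, hr⟩ : ∃ d r, v / q = d ∧ v % q = r := ⟨_, _, rfl, rfl⟩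
    simp only [hd, hr] at hsum0 hvdr0 hrlt0 hdlt0
    have hvdr : q * d + r = v := hvdr0
    have hrlt : r < q := hrlt0
    have hdlt : d < q ^ m := hdlt0
    have hsum : (Nat.digits q v).sum = r + (Nat.digits q d).sum := hsum0
    have hmul : (m + 1) * (q - 1) = m * (q - 1) + (q - 1) := by ring
    have hqq : q ^ (m + 1) = q * q ^ m := by rw [pow_succ]; ring
    rcases Nat.lt_or_ge (d + 1) (q ^ m) with hcase | hcase
    · -- d + 1 < q^m, IH applies to d
      obtain ⟨ihb, ihe⟩ := ih d hcase
      rcases Nat.lt_or_ge (r + 1) q with hrc | hrc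
      · -- r + 1 < q : strict bound
        have hb : (Nat.digits q v).sum + 1 < (m + 1) * (q - 1) := by omega
        have himp : ¬ ∃ i, i < m + 1 ∧ v + 1 + q ^ i = q ^ (m + 1) := by
          rintro ⟨j, hj, hje⟩
          rcases j with _ | j'
          · simp only [pow_zero] at hje
            -- q*d + (r+2) = q*q^m
            obtain ⟨k, hk1, hk2⟩ := cancelAux q d (q ^ m) (r + 2) (by omega) (by omega)
            have hk0 : k ≠ 0 := by rintro rfl; omega
            have hkle : q * k ≤ q * 1 := by omega
            have : k ≤ 1 := Nat.le_of_mul_le_mul_left hkle (by omega)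
            -- k = 1 forces d + 1 = q^m, contradiction
            omega
          · have e1 : q ^ (j' + 1) = q * q ^ j' := by rw [pow_succ]; ring
            -- q*(d + q^{j'}) + (r+1) = q*q^m
            have heq : q * (d + q ^ j') + (r + 1) = q * q ^ m := by
              have : q * (d + q ^ j') = q * d + q * q ^ j' := by ring
              omega
            obtain ⟨k, hk1, hk2⟩ := cancelAux q (d + q ^ j') (q ^ m) (r + 1) (by omega) heq
            have hk0 : k ≠ 0 := by rintro rfl; omega
            have : q * 1 ≤ q * k := Nat.mul_le_mul_left q (by omega)
            omega
        constructor
        · omega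
        constructor
        · intro he
          exact absurd he (by omega)
        · intro hex
          exact absurd hex himp
      · -- r = q - 1
        have hre : r = q - 1 := by clear ihe; omega
        constructor
        · omega
        constructor
        · intro he
          have : (Nat.digits q d).sum + 1 = m * (q - 1) := by omega
          obtain ⟨i, hi, hie⟩ := ihe.mp this
          refine ⟨i + 1, by omega, ?_⟩
          have h1 : q * (d + 1 + q ^ i) = q * q ^ m := by rw [hie]
          have h2 : q * (d + 1 + q ^ i) = q * d + q + q * q ^ i := by ring
          have h3 : q ^ (i + 1) = q * q ^ i := by rw [pow_succ]; ring
          omega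
        · rintro ⟨j, hj, hje⟩
          rcases j with _ | j'
          · simp only [pow_zero] at hje
            exfalso
            -- q*(d+1) + 1 = q*q^m
            have heq : q * (d + 1) + 1 = q * q ^ m := by
              have : q * (d + 1) = q * d + q := by ring
              omega
            obtain ⟨k, hk1, hk2⟩ := cancelAux q (d + 1) (q ^ m) 1 (by omega) heq
            have hk0 : k ≠ 0 := by rintro rfl; omega
            have : q * 1 ≤ q * k := Nat.mul_le_mul_left q (by omega)
            omega
          · have e1 : q ^ (j' + 1) = q * q ^ j' := by rw [pow_succ]; ring
            have hje' : q * (d + 1 + q ^ j') = q * q ^ m := by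
              have : q * (d + 1 + q ^ j') = q * d + q + q * q ^ j' := by ring
              omega
            have hdm : d + 1 + q ^ j' = q ^ m :=
              Nat.eq_of_mul_eq_mul_left (by omega) hje'
            have hj' : j' < m := by
              have h1 : 1 ≤ q ^ j' := Nat.one_le_pow _ _ (by omega)
              by_contra hc
              have : q ^ m ≤ q ^ j' := Nat.pow_le_pow_right (by omega) (by omega)
              omega
            have : (Nat.digits q d).sum + 1 = m * (q - 1) := ihe.mpr ⟨j', hj', hdm⟩
            omega
    · -- d + 1 = q^m
      have hdm : d + 1 = q ^ m := by omega
      have hsd : (Nat.digits q d).sum = m * (q - 1) := (lemA q hq m d hdlt).2.mpr hdm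
      have hqd : q * q ^ m = q * d + q := by rw [← hdm]; ring
      have hrb : r + 1 < q := by omega
      constructor
      · omega
      constructor
      · intro he
        refine ⟨0, by omega, ?_⟩
        simp only [pow_zero]
        omega
      · rintro ⟨j, hj, hje⟩
        have hj0 : j = 0 := by
          by_contra hc
          have h1 : q ≤ q ^ j := Nat.le_self_pow hc q
          omega
        subst hj0
        simp only [pow_zero] at hje
        omega

/-- digit sum of q^m + w for w < q^m -/
private lemma lemAdd (q : ℕ) (hq : 2 ≤ q) :
    ∀ m w, w < q ^ m →
      (Nat.digits q (q ^ m + w)).sum = (Nat.digits q w).sum + 1 := by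
  intro m
  induction m with
  | zero =>
    intro w hw
    have : w = 0 := by simpa using hw
    subst this
    simp only [pow_zero, Nat.add_zero]
    rw [Nat.digits_def' (by omega : 1 < q) (by norm_num)]
    rw [Nat.div_eq_of_lt (by omega : 1 < q), Nat.mod_eq_of_lt (by omega : 1 < q)]
    simp
  | succ m ih =>
    intro w hw
    have hqq : q ^ (m + 1) = q * q ^ m := by rw [pow_succ]; ring
    have h1 : (q ^ (m + 1) + w) % q = w % q := by
      rw [hqq, show q * q ^ m + w = w + q * q ^ m by ring]
      exact Nat.add_mul_mod_self_left w q (q ^ m)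
    have h2 : (q ^ (m + 1) + w) / q = q ^ m + w / q := by
      rw [hqq, show q * q ^ m + w = w + q * q ^ m by ring]
      rw [Nat.add_mul_div_left _ _ (by omega : 0 < q)]
      ring
    have h3 : w / q < q ^ m := by
      apply Nat.div_lt_of_lt_mul
      rw [← pow_succ']; exact hw
    rw [digSum_step q hq (q ^ (m + 1) + w), h1, h2, ih _ h3, digSum_step q hq w]
    ring

/-- let `δ = q^{n-ρ} - 1` and `1 ≤ u ≤ δ - 1`. Then
`wt_q(δ + u) ≤ (n-ρ)(q-1)`, with equality iff `u = q^{n-ρ} - q^j` for some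
`j ∈ [1, n-ρ-1]`. (Here `wt_q` is the full base-`q` digit sum.) -/
theorem stmt_14 (q n ρ u : ℕ) (hq : 2 ≤ q) (hρ : ρ ≤ n - 1) (hn : 1 ≤ n)
    (hu1 : 1 ≤ u) (hu2 : u ≤ q ^ (n - ρ) - 1 - 1) :
    (Nat.digits q (q ^ (n - ρ) - 1 + u)).sum ≤ (n - ρ) * (q - 1) ∧
    ((Nat.digits q (q ^ (n - ρ) - 1 + u)).sum = (n - ρ) * (q - 1) ↔
      ∃ j, 1 ≤ j ∧ j ≤ n - ρ - 1 ∧ u = q ^ (n - ρ) - q ^ j) := by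
  set m := n - ρ with hm
  have hm1 : 1 ≤ m := by omega
  have hq2 : 2 ≤ q ^ m := by
    calc 2 ≤ q := hq
    _ ≤ q ^ m := Nat.le_self_pow (by omega) q
  have hkey : q ^ m - 1 + u = q ^ m + (u - 1) := by omega
  rw [hkey, lemAdd q hq m (u - 1) (by omega)]
  obtain ⟨hb, he⟩ := lemB q hq m (u - 1) (by omega)
  refine ⟨hb, he.trans ?_⟩
  clear hb he
  constructor
  · rintro ⟨i, hi, hie⟩
    have hi1 : 1 ≤ i := by
      rcases Nat.eq_zero_or_pos i with h | h
      · subst h; simp only [pow_zero] at hie; omega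
      · omega
    have h1 : i ≤ m - 1 := by omega
    have h2 : u = q ^ m - q ^ i := by omega
    exact ⟨i, hi1, h1, h2⟩
  · rintro ⟨j, hj1, hj2, hje⟩
    have hpq : q ^ j ≤ q ^ m := Nat.pow_le_pow_right (by omega) (by omega)
    have h1 : j < m := by omega
    have h2 : u - 1 + 1 + q ^ j = q ^ m := by omega
    exact ⟨j, h1, h2⟩
end

section
/- Let σ(X) = 1 + Σ_{i ∈ I_k} σ_i X^i with I_k = {q^k − q^j : j ∈ [0, k−1]} and σ_{q^k−1} ≠ 0, a polynomial of degree δ = q^k − 1 over F_{q^n} with δ < q^n − 1. Then σ(X) splits in F_{q^n} with simple roots if and only if the reciprocals of its roots, together with 0, form a k-dimensional F_q-subspace of F_{q^n}. -/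
open Polynomial


lemma aux_frob {K F : Type*} [Field K] [Field F] [Algebra K F] [Fintype K] (t : ℕ) :
    ∃ φ : F →ₗ[K] F, ∀ g : F, φ g = g ^ (Fintype.card K) ^ t := by
  have hK : CharP K (ringChar K) := ringChar.charP K
  have hp : (ringChar K).Prime := CharP.char_is_prime K (ringChar K)
  haveI : Fact (ringChar K).Prime := ⟨hp⟩
  haveI : CharP F (ringChar K) :=
    charP_of_injective_algebraMap (algebraMap K F).injective (ringChar K)
  obtain ⟨m, -, hm⟩ := FiniteField.card K (ringChar K)
  refine ⟨⟨⟨fun g => g ^ (Fintype.card K) ^ t, ?_⟩, ?_⟩, fun g => rfl⟩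
  · intro a b
    simp only [hm, ← pow_mul]
    exact add_pow_char_pow ..
  · intro a g
    simp only [RingHom.id_apply, Algebra.smul_def, mul_pow, ← map_pow,
      FiniteField.pow_card_pow]

lemma aux_linmap {K F : Type*} [Field K] [Field F] [Algebra K F] [Fintype K] (k : ℕ) (c : ℕ → F) :
    ∃ f : F →ₗ[K] F, ∀ g : F,
      f g = g ^ (Fintype.card K) ^ k + ∑ j ∈ Finset.range k, c j * g ^ (Fintype.card K) ^ j := by
  have h : ∀ t : ℕ, ∃ φ : F →ₗ[K] F, ∀ g : F, φ g = g ^ (Fintype.card K) ^ t := aux_frob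
  choose Φ hΦ using h
  refine ⟨Φ k + ∑ j ∈ Finset.range k, c j • Φ j, fun g => ?_⟩
  simp [LinearMap.sum_apply, hΦ, smul_eq_mul]

lemma aux_inj {q k : ℕ} (hq : 2 ≤ q) : ∀ j1 ∈ Finset.range k, ∀ j2 ∈ Finset.range k,
    q ^ k - q ^ j1 = q ^ k - q ^ j2 → j1 = j2 := by
  intro j1 h1 j2 h2 h
  simp only [Finset.mem_range] at h1 h2
  have e1 : q ^ j1 ≤ q ^ k := Nat.pow_le_pow_right (by omega) h1.le
  have e2 : q ^ j2 ≤ q ^ k := Nat.pow_le_pow_right (by omega) h2.le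
  have : q ^ j1 = q ^ j2 := by omega
  exact Nat.pow_right_injective hq this

lemma aux_eval {F : Type*} [Field F] (q k : ℕ) (hq : 2 ≤ q) (σ : F[X])
    (hσ0 : σ.coeff 0 = 1)
    (hsupp : ∀ i, σ.coeff i ≠ 0 → i = 0 ∨ ∃ j < k, i = q ^ k - q ^ j) (y : F) :
    σ.eval y = 1 + ∑ j ∈ Finset.range k, σ.coeff (q ^ k - q ^ j) * y ^ (q ^ k - q ^ j) := by
  have hne : ∀ j ∈ Finset.range k, q ^ k - q ^ j ≠ 0 := by
    intro j hj
    simp only [Finset.mem_range] at hj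
    have : q ^ j < q ^ k := Nat.pow_lt_pow_right (by omega) hj
    omega
  have hsub : σ.support ⊆ insert 0 ((Finset.range k).image fun j => q ^ k - q ^ j) := by
    intro i hi
    rcases hsupp i (mem_support_iff.mp hi) with h | ⟨j, hj, rfl⟩
    · simp [h]
    · exact Finset.mem_insert_of_mem (Finset.mem_image.mpr ⟨j, Finset.mem_range.mpr hj, rfl⟩)
  rw [eval_eq_sum, Polynomial.sum_def]
  rw [Finset.sum_subset hsub (fun i _ hi => by rw [notMem_support_iff.mp hi, zero_mul])]
  rw [Finset.sum_insert (by
    simp only [Finset.mem_image, not_exists]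
    intro j hj
    exact hne j hj.1 hj.2)]
  rw [Finset.sum_image (aux_inj hq), hσ0, pow_zero, mul_one]

lemma aux_key {F : Type*} [Field F] (q k : ℕ) (hq : 2 ≤ q) (σ : F[X])
    (hσ0 : σ.coeff 0 = 1)
    (hsupp : ∀ i, σ.coeff i ≠ 0 → i = 0 ∨ ∃ j < k, i = q ^ k - q ^ j) (x : F) (hx : x ≠ 0) :
    x ^ q ^ k * σ.eval x⁻¹ =
      x ^ q ^ k + ∑ j ∈ Finset.range k, σ.coeff (q ^ k - q ^ j) * x ^ q ^ j := by
  rw [aux_eval q k hq σ hσ0 hsupp, mul_add, mul_one, Finset.mul_sum]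
  congr 1
  refine Finset.sum_congr rfl fun j hj => ?_
  simp only [Finset.mem_range] at hj
  have h1 : q ^ j ≤ q ^ k := Nat.pow_le_pow_right (by omega) hj.le
  have h2 : x ^ (q ^ k - q ^ j) ≠ 0 := pow_ne_zero _ hx
  rw [mul_left_comm]
  congr 1
  rw [inv_pow, ← div_eq_mul_inv, div_eq_iff h2, ← pow_add]
  congr 1
  omega

/-- let `σ(X) = 1 + Σ_{i ∈ I_k} σ_i X^i` with
`I_k = {q^k - q^j : j ∈ [0, k-1]}` and leading coefficient `σ_{q^k-1} ≠ 0`, a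
polynomial of degree `δ = q^k - 1 < q^n - 1` over `F_{q^n}`. Then `σ` splits in
`F_{q^n}` with simple roots iff the reciprocals of its roots, together with `0`,
form a `k`-dimensional `F_q`-subspace of `F_{q^n}`. -/
theorem stmt_16 {K F : Type*} [Field K] [Field F] [Algebra K F] [Fintype K] [Fintype F]
    (n k : ℕ) (hk : 1 ≤ k) (hkn : k < n)
    (hF : Fintype.card F = (Fintype.card K) ^ n)
    (σ : Polynomial F)
    (hσ0 : σ.coeff 0 = 1)
    (hσtop : σ.coeff ((Fintype.card K) ^ k - 1) ≠ 0)
    (hsupp : ∀ i, σ.coeff i ≠ 0 → i = 0 ∨ ∃ j < k, i = (Fintype.card K) ^ k - (Fintype.card K) ^ j) :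
    (σ.roots.card = (Fintype.card K) ^ k - 1 ∧ σ.roots.Nodup) ↔
      ∃ V : Submodule K F, Module.finrank K ↥V = k ∧
        (V : Set F) = insert 0 {g : F | g ≠ 0 ∧ σ.eval g⁻¹ = 0} := by
  classical
  set q := Fintype.card K with hqdef
  have hq : 2 ≤ q := Fintype.one_lt_card
  have hqk1 : 1 ≤ q ^ k := Nat.one_le_pow _ _ (by omega)
  have hσne : σ ≠ 0 := fun h => by simp [h] at hσ0
  have hdeg : σ.natDegree ≤ q ^ k - 1 := by
    rw [Polynomial.natDegree_le_iff_coeff_eq_zero]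
    intro N hN
    by_contra hc
    rcases hsupp N hc with rfl | ⟨j, hj, rfl⟩
    · omega
    · have h1 : 1 ≤ q ^ j := Nat.one_le_pow _ _ (by omega)
      omega
  have hroot0 : ∀ r ∈ σ.roots, r ≠ 0 := by
    intro r hr hr0
    rw [mem_roots hσne, IsRoot] at hr
    rw [hr0, ← Polynomial.coeff_zero_eq_eval_zero, hσ0] at hr
    exact one_ne_zero hr
  set S : Set F := {g : F | g ≠ 0 ∧ σ.eval g⁻¹ = 0} with hS
  set RF : Finset F := σ.roots.toFinset with hRF
  set SF : Finset F := RF.image (·⁻¹) with hSF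
  have hSset : S = ↑SF := by
    ext g
    simp only [hS, Set.mem_setOf_eq, hSF, Finset.coe_image, Set.mem_image, Finset.mem_coe, hRF,
      Multiset.mem_toFinset]
    constructor
    · rintro ⟨hg, hg2⟩
      exact ⟨g⁻¹, (mem_roots hσne).mpr hg2, inv_inv g⟩
    · rintro ⟨r, hr, rfl⟩
      have hr0 : r ≠ 0 := hroot0 r hr
      exact ⟨inv_ne_zero hr0, by rw [inv_inv]; exact (mem_roots hσne).mp hr⟩
  have hSFcard : SF.card = RF.card := Finset.card_image_of_injective _ inv_injective
  have h0S : (0 : F) ∉ SF := by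
    simp only [hSF, Finset.mem_image, hRF, Multiset.mem_toFinset, not_exists]
    rintro r ⟨hr, hr0⟩
    exact hroot0 r hr (by simpa using (congrArg (·⁻¹) hr0.symm).symm)
  have hVcard : ∀ V : Submodule K F, Nat.card ↥V = q ^ Module.finrank K ↥V := by
    intro V
    rw [Nat.card_eq_fintype_card, Module.card_eq_pow_finrank (K := K)]
  have hcount : ∀ V : Submodule K F, (V : Set F) = insert 0 S → Nat.card ↥V = SF.card + 1 := by
    intro V hV
    rw [← SetLike.coe_sort_coe, Nat.card_coe_set_eq, hV, hSset, ← Finset.coe_insert,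
      Set.ncard_coe_finset, Finset.card_insert_of_notMem h0S]
  constructor
  · rintro ⟨h1, h2⟩
    have hRFcard : RF.card = q ^ k - 1 := by
      rw [hRF, Multiset.toFinset_card_of_nodup h2, h1]
    obtain ⟨f, hf⟩ := aux_linmap (K := K) (F := F) k (fun j => σ.coeff (q ^ k - q ^ j))
    have hker : ((LinearMap.ker f : Submodule K F) : Set F) = insert 0 S := by
      ext g
      simp only [SetLike.mem_coe, LinearMap.mem_ker, Set.mem_insert_iff, hS, Set.mem_setOf_eq]
      rcases eq_or_ne g 0 with rfl | hg
      · simp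
      · have hkey := aux_key q k hq σ hσ0 hsupp g hg
        rw [hf]
        constructor
        · intro h
          right
          refine ⟨hg, ?_⟩
          have h' : g ^ q ^ k * σ.eval g⁻¹ = 0 := by rw [hkey, h]
          rcases mul_eq_zero.mp h' with h'' | h''
          · exact absurd h'' (pow_ne_zero _ hg)
          · exact h''
        · rintro (rfl | ⟨-, h⟩)
          · exact absurd rfl hg
          · rw [← hkey, h, mul_zero]
    refine ⟨LinearMap.ker f, ?_, hker⟩
    have hc := hcount _ hker
    rw [hVcard] at hc
    rw [hSFcard, hRFcard] at hc
    have : q ^ Module.finrank K ↥(LinearMap.ker f) = q ^ k := by omega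
    exact Nat.pow_right_injective hq this
  · rintro ⟨V, hV1, hV2⟩
    have hc1 : Nat.card ↥V = q ^ k := by rw [hVcard, hV1]
    have hc2 : Nat.card ↥V = SF.card + 1 := hcount V hV2
    have hRFcard : RF.card = q ^ k - 1 := by omega
    have hle1 : σ.roots.card ≤ q ^ k - 1 := le_trans (Polynomial.card_roots' σ) hdeg
    have hle2 : RF.card ≤ σ.roots.card := Multiset.toFinset_card_le _
    have hcard : σ.roots.card = q ^ k - 1 := by omega
    refine ⟨hcard, Multiset.toFinset_card_eq_card_iff_nodup.mp ?_⟩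
    rw [← hRF] at *
    omega
end

section
/- Let V be an F_{q^2}-subspace of F_{q^n} (n = 2m) of F_{q^2}-dimension m − ρ'. Then for every integer u with wt_q(u) ≤ (n − 2ρ')(q−1) − 1, or with wt_q(u) = (n − 2ρ')(q−1) and O(u) ≠ E(u), the power sum Σ_{g ∈ V, g ≠ 0} g^u equals 0. -/
open Finset

section PowerSums

open MvPolynomial

theorem MvPolynomial.sum_eval_algebraMap_eq_zero {K R σ : Type*} [Field K] [Fintype K]
    [CommRing R] [Algebra K R] [Fintype σ] [DecidableEq σ] (f : MvPolynomial σ R)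
    (h : f.totalDegree < (Fintype.card K - 1) * Fintype.card σ) :
    ∑ x : σ → K, eval (fun i ↦ algebraMap K R (x i)) f = 0 := by
  simp only [eval_eq', ← map_pow, ← map_prod]
  rw [sum_comm]
  refine sum_eq_zero fun d hd ↦ ?_
  have hd' : (monomial d (1 : K)).totalDegree < (Fintype.card K - 1) * Fintype.card σ :=
    (totalDegree_monomial_le d 1).trans_lt ((le_totalDegree hd).trans_lt h)
  have hsum : ∑ x : σ → K, ∏ i, x i ^ d i = 0 := by
    simpa [eval_monomial, Finsupp.prod_fintype] using sum_eval_eq_zero _ hd'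
  rw [← mul_sum, ← map_sum, hsum, map_zero, mul_zero]

theorem pow_eq_prod_pow_digits {M : Type*} [CommMonoid M] (x : M) {b N u : ℕ} (hu : u < b ^ N) :
    x ^ u = ∏ j ∈ range N, (x ^ b ^ j) ^ (u / b ^ j % b) := by
  induction N generalizing x u with
  | zero => simp_all
  | succ N ih =>
    have hu' : u / b < b ^ N := Nat.div_lt_of_lt_mul (by rwa [← pow_succ'])
    rw [prod_range_succ', pow_zero, pow_one, Nat.div_one]
    simp only [pow_succ', pow_mul, ← Nat.div_div_eq_div_mul]
    rw [← ih _ hu', ← pow_mul, ← pow_add, Nat.div_add_mod]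

theorem FiniteField.sum_smul_pow_card_pow_s17 {K R ι : Type*} [Field K] [Fintype K] [CommRing R]
    [Algebra K R] (s : Finset ι) (c : ι → K) (v : ι → R) (j : ℕ) :
    (∑ i ∈ s, c i • v i) ^ Fintype.card K ^ j = ∑ i ∈ s, c i • v i ^ Fintype.card K ^ j := by
  induction j with
  | zero => simp
  | succ j ih =>
    rw [pow_succ, pow_mul, ih]
    have h := map_sum (frobeniusAlgHom K R) (fun i ↦ c i • v i ^ Fintype.card K ^ j) s
    simp only [map_smul, coe_frobeniusAlgHom] at h
    simpa only [pow_mul] using h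

theorem Submodule.sum_pow_eq_zero_of_wtq_lt {K R : Type*} [Field K] [Fintype K] [CommRing R]
    [Algebra K R] (V : Submodule K R) [Fintype V] {N u : ℕ} (hu : u < Fintype.card K ^ N)
    (hwt : wtq (Fintype.card K) N u < Module.finrank K V * (Fintype.card K - 1)) :
    ∑ g : V, (g : R) ^ u = 0 := by
  classical
  let b := Module.finBasis K V
  let P : MvPolynomial (Fin (Module.finrank K V)) R :=
    ∏ j ∈ range N,
      (∑ i, C ((b i : R) ^ Fintype.card K ^ j) * X i) ^ (u / Fintype.card K ^ j % Fintype.card K)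
  have hP : P.IsHomogeneous (wtq (Fintype.card K) N u) := by
    simpa [wtq] using IsHomogeneous.prod _ _ _ fun j _ ↦
      (IsHomogeneous.sum _ _ 1 fun i _ ↦ isHomogeneous_C_mul_X _ i).pow _
  have heval (c) : eval (fun i ↦ algebraMap K R (c i)) P = ((b.equivFun.symm c : V) : R) ^ u := by
    simp only [pow_eq_prod_pow_digits _ hu, Module.Basis.equivFun_symm_apply, coe_sum, coe_smul,
      FiniteField.sum_smul_pow_card_pow_s17]
    simp [P, Algebra.smul_def, mul_comm]
  calc ∑ g : V, (g : R) ^ u = ∑ c, ((b.equivFun.symm c : V) : R) ^ u :=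
        (b.equivFun.symm.toEquiv.sum_comp fun g : V ↦ (g : R) ^ u).symm
    _ = 0 := by
      simp_rw [← heval]
      exact sum_eval_algebraMap_eq_zero P <| hP.totalDegree_le.trans_lt <| by
        simpa [mul_comm] using hwt

end PowerSums

theorem sum_pow_eq_sum_pow_of_card_eq_sq {K F ι : Type*} [Field K] [Fintype K] [Field F]
    [Algebra K F] {q : ℕ} (hK : Fintype.card K = q ^ 2) (s : Finset ι) (f : ι → F) :
    (∑ i ∈ s, f i) ^ q = ∑ i ∈ s, f i ^ q := by
  obtain ⟨p, _, n, hp, hcard⟩ := FiniteField.card' K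
  have : Fact p.Prime := ⟨hp⟩
  have : CharP F p := charP_of_injective_algebraMap' K p
  obtain ⟨c, -, rfl⟩ := (Nat.dvd_prime_pow hp).mp (hcard ▸ hK ▸ dvd_pow_self q two_ne_zero)
  exact sum_pow_char_pow p c s f

theorem even_q_succ (q n u : ℕ) :
    Even_q q (n + 1) u = Even_q q n u + if n % 2 = 0 then u / q ^ n % q else 0 := by
  simp only [Even_q, sum_filter, sum_range_succ]

theorem odd_q_succ (q n u : ℕ) :
    Odd_q q (n + 1) u = Odd_q q n u + if n % 2 = 1 then u / q ^ n % q else 0 := by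
  simp only [Odd_q, sum_filter, sum_range_succ]

theorem wtq_eq_even_q_add_odd_q (q n u : ℕ) : wtq q n u = Even_q q n u + Odd_q q n u := by
  simp only [wtq, Even_q, Odd_q, sum_filter, ← sum_add_distrib]
  refine sum_congr rfl fun i _ ↦ ?_
  rcases Nat.mod_two_eq_zero_or_one i with h | h <;> simp [h]

theorem wtq_sq_eq (q N u : ℕ) :
    wtq (q ^ 2) N u = Even_q q (2 * N) u + q * Odd_q q (2 * N) u := by
  induction N with
  | zero => simp [wtq, Even_q, Odd_q]
  | succ N ih =>
    rw [wtq, sum_range_succ, ← wtq, ih, Nat.mul_succ, even_q_succ, even_q_succ, odd_q_succ,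
      odd_q_succ, ← pow_mul, sq, Nat.mod_mul, pow_succ, ← Nat.div_div_eq_div_mul]
    simp only [Nat.mul_mod_right, Nat.mul_add_mod_self_left, Nat.mod_succ, one_ne_zero,
      zero_ne_one, ↓reduceIte, add_zero]
    ring

theorem even_q_succ_mul {q : ℕ} (hq : 0 < q) (n u : ℕ) :
    Even_q q (n + 1) (q * u) = Odd_q q n u := by
  simp only [Even_q, Odd_q, sum_filter, sum_range_succ', pow_succ', ← Nat.div_div_eq_div_mul,
    Nat.mul_div_cancel_left u hq]
  simp only [Nat.mul_mod_right, pow_zero, Nat.div_one, ↓reduceIte, add_zero]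
  exact sum_congr rfl fun i _ ↦ if_congr (by omega) rfl rfl

theorem odd_q_succ_mul {q : ℕ} (hq : 0 < q) (n u : ℕ) :
    Odd_q q (n + 1) (q * u) = Even_q q n u := by
  simp only [Even_q, Odd_q, sum_filter, sum_range_succ', pow_succ', ← Nat.div_div_eq_div_mul,
    Nat.mul_div_cancel_left u hq]
  simp only [Nat.zero_mod, zero_ne_one, ↓reduceIte, add_zero]
  exact sum_congr rfl fun i _ ↦ if_congr (by omega) rfl rfl

theorem wtq_sq_succ_mul {q m u : ℕ} (hq : 0 < q) (hu : u < q ^ (2 * m)) :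
    wtq (q ^ 2) (m + 1) (q * u) = Odd_q q (2 * m) u + q * Even_q q (2 * m) u := by
  rw [wtq_sq_eq, Nat.mul_succ, even_q_succ_mul hq, odd_q_succ_mul hq, odd_q_succ, even_q_succ,
    Nat.div_eq_of_lt hu]
  simp only [Nat.mul_mod_right, zero_ne_one, Nat.zero_mod, ↓reduceIte, add_zero]

theorem add_mul_lt_mul_sq_sub_one {q k A B : ℕ} (hq : 1 < q) (hAB : A + B ≤ 2 * k * (q - 1))
    (hB : 2 * B < 2 * k * (q - 1)) : A + q * B < k * (q ^ 2 - 1) := by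
  obtain ⟨r, rfl⟩ : ∃ r, q = r + 1 := ⟨q - 1, by omega⟩
  have h : (r + 1) ^ 2 - 1 = r * (r + 2) := by
    rw [Nat.sub_eq_of_eq_add]; ring
  simp only [Nat.add_sub_cancel] at hAB hB
  rw [h]
  nlinarith

theorem stmt_17_general {K2 F : Type*} [Field K2] [Field F] [Algebra K2 F]
    [Fintype K2] [DecidableEq F]
    (q m ρ' : ℕ) (hq : 2 ≤ q) (hρ : ρ' < m)
    (hK2 : Fintype.card K2 = q ^ 2)
    (V : Submodule K2 F) [Fintype ↥V] (hV : Module.finrank K2 ↥V = m - ρ')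
    (u : ℕ) (hu1 : 1 ≤ u) (hu2 : u ≤ q ^ (2 * m) - 1)
    (hwt : wtq q (2 * m) u ≤ (2 * m - 2 * ρ') * (q - 1) - 1 ∨
           (wtq q (2 * m) u = (2 * m - 2 * ρ') * (q - 1) ∧
            Odd_q q (2 * m) u ≠ Even_q q (2 * m) u)) :
    ∑ g ∈ Finset.univ.filter (fun g : V => (g : F) ≠ 0), (g : F) ^ u = 0 := by
  have hu : u < q ^ (2 * m) := Nat.lt_of_le_pred (by positivity) hu2
  have vanish {N w : ℕ} (hw : w < (q ^ 2) ^ N) (hwt : wtq (q ^ 2) N w < (m - ρ') * (q ^ 2 - 1)) :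
      ∑ g : V, (g : F) ^ w = 0 :=
    V.sum_pow_eq_zero_of_wtq_lt (hK2 ▸ hw) (by rwa [hK2, hV])
  -- `hwt` amounts to `E + O ≤ X` and `2 min(E, O) < X`, where `X = 2(m - ρ')(q - 1) > 0`
  have hX : 2 * (m - ρ') * (q - 1) = (2 * m - 2 * ρ') * (q - 1) := by
    congr 1; omega
  have hXpos : 0 < 2 * (m - ρ') * (q - 1) := Nat.mul_pos (by omega) (by omega)
  rw [wtq_eq_even_q_add_odd_q] at hwt
  rw [sum_filter_of_ne fun g _ hg ↦ by rintro h; simp [h, zero_pow (by omega : u ≠ 0)] at hg]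
  rcases le_total (Odd_q q (2 * m) u) (Even_q q (2 * m) u) with hOE | hEO
  · refine vanish (N := m) (by rwa [← pow_mul]) ?_
    rw [wtq_sq_eq]
    exact add_mul_lt_mul_sq_sub_one (by omega) (by omega) (by omega)
  · refine (pow_eq_zero_iff (by omega : q ≠ 0)).mp ?_
    rw [sum_pow_eq_sum_pow_of_card_eq_sq hK2]
    simp_rw [← pow_mul, mul_comm u q]
    refine vanish (N := m + 1) ?_ ?_
    · calc q * u < q ^ 2 * q ^ (2 * m) := by gcongr; nlinarith
        _ = (q ^ 2) ^ (m + 1) := by ring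
    · rw [wtq_sq_succ_mul (by omega) hu]
      exact add_mul_lt_mul_sq_sub_one (by omega) (by omega) (by omega)

/-- let `V` be an `F_{q^2}`-subspace of `F_{q^n}` (`n = 2m`) of
`F_{q^2}`-dimension `m - ρ'`. Then for every integer `u` with
`wt_q(u) ≤ (n - 2ρ')(q-1) - 1`, or with `wt_q(u) = (n - 2ρ')(q-1)` and
`O(u) ≠ E(u)`, the power sum `Σ_{0 ≠ g ∈ V} g^u` equals `0`. -/
theorem stmt_17 {K2 F : Type*} [Field K2] [Field F] [Algebra K2 F]
    [Fintype K2] [Fintype F] [DecidableEq F]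
    (q m ρ' : ℕ) (hq : 2 ≤ q) (hρ : ρ' < m)
    (hK2 : Fintype.card K2 = q ^ 2) (hF : Fintype.card F = q ^ (2 * m))
    (V : Submodule K2 F) [Fintype ↥V] (hV : Module.finrank K2 ↥V = m - ρ')
    (u : ℕ) (hu1 : 1 ≤ u) (hu2 : u ≤ q ^ (2 * m) - 1)
    (hwt : wtq q (2 * m) u ≤ (2 * m - 2 * ρ') * (q - 1) - 1 ∨
           (wtq q (2 * m) u = (2 * m - 2 * ρ') * (q - 1) ∧
            Odd_q q (2 * m) u ≠ Even_q q (2 * m) u)) :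
    ∑ g ∈ Finset.univ.filter (fun g : V => (g : F) ≠ 0), (g : F) ^ u = 0 :=
  stmt_17_general q m ρ' hq hρ hK2 V hV u hu1 hu2 hwt
end

section
/- Let δ = q^{n−ρ} − 1 and suppose Λ : ℕ → F_{q^n} and σ_1,...,σ_δ ∈ F_{q^n} satisfy the Newton identities Λ_{j+δ} + Σ_{i=1}^{δ} σ_i Λ_{j+δ−i} = 0 for all j ≥ 0, with Λ_u = 0 for all 1 ≤ u ≤ δ − 1, Λ_δ ≠ 0, and Λ_{δ+u} = 0 for all u ∈ [1, δ−1] not in I_{n−ρ} = {q^{n−ρ} − q^j : j ∈ [0, n−ρ−1]}. Then σ_u = 0 for all u ∈ [1, δ−1] \ I_{n−ρ}, and σ_u = −Λ_{δ+u}/Λ_δ for u ∈ I_{n−ρ}. -/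
/-- let `δ = q^{n-ρ} - 1` and suppose `Λ : ℕ → F_{q^n}` and
`σ_1, ..., σ_δ` satisfy the Newton identities
`Λ_{j+δ} + Σ_{i=1}^{δ} σ_i Λ_{j+δ-i} = 0` for all `j ≥ 0`, with `Λ_u = 0` for
`1 ≤ u ≤ δ-1`, `Λ_δ ≠ 0`, and `Λ_{δ+u} = 0` for all `u ∈ [1, δ-1]` not in
`I_{n-ρ} = {q^{n-ρ} - q^j : j ∈ [0, n-ρ-1]}`. Then `σ_u = 0` for all
`u ∈ [1, δ-1] \ I_{n-ρ}`, and `σ_u = -Λ_{δ+u}/Λ_δ` for `u ∈ I_{n-ρ}`. -/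
theorem stmt_19 {F : Type*} [Field F] [Fintype F]
    (q n ρ : ℕ) (hq : 2 ≤ q) (hρ : ρ ≤ n - 1) (hn : 1 ≤ n)
    (hF : Fintype.card F = q ^ n)
    (Λ : ℕ → F) (σ : ℕ → F)
    (hNewton : ∀ j : ℕ,
      Λ (j + (q ^ (n - ρ) - 1)) +
        ∑ i ∈ Finset.Icc 1 (q ^ (n - ρ) - 1), σ i * Λ (j + (q ^ (n - ρ) - 1) - i) = 0)
    (hΛlow : ∀ u, 1 ≤ u → u ≤ q ^ (n - ρ) - 1 - 1 → Λ u = 0)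
    (hΛδ : Λ (q ^ (n - ρ) - 1) ≠ 0)
    (hΛhigh : ∀ u, 1 ≤ u → u ≤ q ^ (n - ρ) - 1 - 1 →
      (∀ j ≤ n - ρ - 1, u ≠ q ^ (n - ρ) - q ^ j) → Λ (q ^ (n - ρ) - 1 + u) = 0) :
    ∀ u, 1 ≤ u → u ≤ q ^ (n - ρ) - 1 - 1 →
      ((∀ j ≤ n - ρ - 1, u ≠ q ^ (n - ρ) - q ^ j) → σ u = 0) ∧
      ((∃ j ≤ n - ρ - 1, u = q ^ (n - ρ) - q ^ j) →
        σ u = -Λ (q ^ (n - ρ) - 1 + u) / Λ (q ^ (n - ρ) - 1)) := by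
  have hm : 1 ≤ n - ρ := by omega
  have hqm : 2 ≤ q ^ (n - ρ) := le_trans hq (Nat.le_self_pow (by omega) q)
  have hhalf : 2 * q ^ (n - ρ - 1) ≤ q ^ (n - ρ) := by
    calc 2 * q ^ (n - ρ - 1) ≤ q * q ^ (n - ρ - 1) := by
          exact Nat.mul_le_mul_right _ hq
      _ = q ^ (n - ρ) := by
          rw [← pow_succ']
          congr 1
          omega
  have hpow : ∀ j ≤ n - ρ - 1, 1 ≤ q ^ j ∧ q ^ j ≤ q ^ (n - ρ - 1) := by
    intro j hj
    exact ⟨Nat.one_le_pow _ _ (by omega), Nat.pow_le_pow_right (by omega) hj⟩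
  have key : ∀ u, 1 ≤ u → u ≤ q ^ (n - ρ) - 1 - 1 →
      σ u = -Λ (q ^ (n - ρ) - 1 + u) / Λ (q ^ (n - ρ) - 1) := by
    intro u
    induction u using Nat.strong_induction_on with
    | _ u ih =>
      intro hu1 hu2
      have hmem : u ∈ Finset.Icc 1 (q ^ (n - ρ) - 1) := by
        simp only [Finset.mem_Icc]; omega
      have hzero : ∀ b ∈ Finset.Icc 1 (q ^ (n - ρ) - 1), b ≠ u →
          σ b * Λ (u + (q ^ (n - ρ) - 1) - b) = 0 := by
        intro b hb hbu
        simp only [Finset.mem_Icc] at hb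
        rcases lt_or_gt_of_ne hbu with hlt | hgt
        · -- b < u
          have hσb := ih b hlt hb.1 (by omega)
          have hidx : u + (q ^ (n - ρ) - 1) - b = q ^ (n - ρ) - 1 + (u - b) := by omega
          rw [hσb, hidx]
          by_cases hI : ∀ j ≤ n - ρ - 1, b ≠ q ^ (n - ρ) - q ^ j
          · rw [hΛhigh b hb.1 (by omega) hI]
            simp
          · push_neg at hI
            obtain ⟨j, hj, hbj⟩ := hI
            have hnot : ∀ k ≤ n - ρ - 1, u - b ≠ q ^ (n - ρ) - q ^ k := by
              intro k hk hcontra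
              obtain ⟨h1j, h2j⟩ := hpow j hj
              obtain ⟨h1k, h2k⟩ := hpow k hk
              omega
            rw [hΛhigh (u - b) (by omega) (by omega) hnot]
            simp
        · -- b > u : index is between 1 and δ - 1
          rw [hΛlow (u + (q ^ (n - ρ) - 1) - b) (by omega) (by omega)]
          simp
      have hsum := hNewton u
      rw [Finset.sum_eq_single_of_mem u hmem hzero] at hsum
      have hidx : u + (q ^ (n - ρ) - 1) - u = q ^ (n - ρ) - 1 := by omega
      rw [hidx] at hsum
      have hcomm : u + (q ^ (n - ρ) - 1) = q ^ (n - ρ) - 1 + u := by omega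
      rw [hcomm] at hsum
      field_simp
      linear_combination hsum
  intro u hu1 hu2
  refine ⟨fun hnot => ?_, fun _ => key u hu1 hu2⟩
  rw [key u hu1 hu2, hΛhigh u hu1 hu2 hnot]
  simp
end
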